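/- For m > 1, the kernel of the b-exponent-sum homomorphism |·|_b : B(m,m) → ℤ is a free group of rank m on the generators xᵢ = b^{-(i-1)} a b^{i-1} (i = 1,…,m), and B(m,m) is isomorphic to the semidirect product F_m ⋊ ℤ where the generator 1 ∈ ℤ acts by the automorphism of F_m cyclically permuting the generators (xⱼ ↦ xⱼ₊₁ for j < m, x_m ↦ x₁). -/

import Mathlib

/-- The defining relation of the Baumslag-Solitar group `B(m,n)`:
`a⁻¹ bᵐ a = bⁿ`, where `a` is `FreeGroup.of false` and `b` is `FreeGroup.of true`. -/
def BSrel (m n : ℤ) : Set (FreeGroup Bool) :=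
  {(FreeGroup.of false)⁻¹ * (FreeGroup.of true) ^ m * FreeGroup.of false *
    ((FreeGroup.of true) ^ n)⁻¹}

/-- The Baumslag-Solitar group `B(m,n) = ⟨a, b | a⁻¹ bᵐ a = bⁿ⟩`. -/
abbrev BS (m n : ℤ) : Type := PresentedGroup (BSrel m n)

/-- The generator `a` of `B(m,n)`. -/
def BSa (m n : ℤ) : BS m n := PresentedGroup.of false

/-- The generator `b` of `B(m,n)`. -/
def BSb (m n : ℤ) : BS m n := PresentedGroup.of true

/-- The action of `ℤ` on the free group `F_m` where the generator `1 ∈ ℤ` acts by the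
automorphism cyclically permuting the free generators (`x_j ↦ x_{j+1}`, `x_m ↦ x₁`). -/
def rotAction (m : ℕ) : Multiplicative ℤ →* MulAut (FreeGroup (Fin m)) :=
  zpowersHom _ (FreeGroup.freeGroupCongr (finRotate m))

/-!
Send `a ↦ x₀` and `b ↦ t`, the generator of `ℤ`; the relation holds because `tᵐ` acts trivially
on `F_m`. Conversely send `xᵢ ↦ bⁱ a b⁻ⁱ` and `t ↦ b`: since `bᵐ` commutes with `a`, the
conjugate `bˢ a b⁻ˢ` depends only on `s mod m`, so conjugation by `b` permutes these conjugates
cyclically, exactly as `t` permutes the `xᵢ`, and the map respects the semidirect structure.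
The two maps are inverse to each other on generators. Any `π` with `π b = t` and `π a = 1`
agrees with the projection `F_m ⋊ ℤ → ℤ` on generators, so its kernel is `F_m`.
-/

theorem Function.Periodic.apply_emod {α : Type*} {f : ℤ → α} {n : ℤ}
    (h : Function.Periodic f n) (s : ℤ) : f (s % n) = f s := by
  rw [Int.emod_def, mul_comm]
  simpa using h.sub_int_mul_eq (s / n)

theorem Function.Semiconj.mulAut_zpow {M N : Type*} [Mul M] [Mul N] {f : M → N}
    {σ : MulAut M} {τ : MulAut N} (h : Function.Semiconj f σ τ) (z : ℤ) :
    Function.Semiconj f ⇑(σ ^ z) ⇑(τ ^ z) := by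
  induction z using Int.induction_on with
  | zero => exact Function.Semiconj.id_right
  | succ k ih =>
    rw [zpow_add_one, zpow_add_one, MulAut.coe_mul, MulAut.coe_mul]
    exact ih.comp_right h
  | pred k ih =>
    rw [zpow_sub_one, zpow_sub_one, MulAut.coe_mul, MulAut.coe_mul]
    exact ih.comp_right (h.inverses_right σ.apply_inv_self τ.inv_apply_self)

theorem Fin.intCast_val_add_one {m : ℕ} [NeZero m] (i : Fin m) :
    ((i + 1 : Fin m) : ℤ) = ((i : ℤ) + 1) % m := by
  rw [Fin.val_add]
  push_cast
  rw [Fin.val_one', Int.natCast_mod, Nat.cast_one, Int.add_emod_emod]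

namespace BS

variable {G : Type*} [Group G] {m n : ℤ}

theorem BSa_inv_mul_BSb_zpow_mul_BSa (m n : ℤ) :
    (BSa m n)⁻¹ * BSb m n ^ m * BSa m n = BSb m n ^ n := by
  have : PresentedGroup.mk (BSrel m n) ((FreeGroup.of false)⁻¹ * FreeGroup.of true ^ m *
      FreeGroup.of false * (FreeGroup.of true ^ n)⁻¹)
      = 1 := PresentedGroup.one_of_mem rfl
  simp only [map_mul, map_inv, map_zpow] at this
  exact mul_inv_eq_one.mp this

theorem commute_BSb_zpow_BSa (m : ℤ) : Commute (BSb m m ^ m) (BSa m m) := by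
  have := BSa_inv_mul_BSb_zpow_mul_BSa m m
  rw [mul_assoc, inv_mul_eq_iff_eq_mul] at this
  exact (commute_iff_eq _ _).2 this

def lift {a b : G} (h : a⁻¹ * b ^ m * a = b ^ n) : BS m n →* G :=
  PresentedGroup.toGroup (f := fun x => bif x then b else a) <| by
    rintro r rfl
    simp only [map_mul, map_inv, map_zpow, FreeGroup.lift_apply_of, cond_true, cond_false]
    exact mul_inv_eq_one.2 h

@[simp]
theorem lift_BSa {a b : G} (h : a⁻¹ * b ^ m * a = b ^ n) : lift h (BSa m n) = a :=
  PresentedGroup.toGroup.of _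

@[simp]
theorem lift_BSb {a b : G} (h : a⁻¹ * b ^ m * a = b ^ n) : lift h (BSb m n) = b :=
  PresentedGroup.toGroup.of _

theorem hom_ext {f g : BS m n →* G} (ha : f (BSa m n) = g (BSa m n))
    (hb : f (BSb m n) = g (BSb m n)) : f = g :=
  PresentedGroup.ext fun x => by cases x; exacts [ha, hb]

end BS

section Conjugates

variable {G : Type*} [Group G] (a b : G)

theorem periodic_zpow_mul_mul_zpow_neg {n : ℤ} (h : Commute (b ^ n) a) :
    Function.Periodic (fun s : ℤ => b ^ s * a * b ^ (-s)) n := fun s => by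
  simp only [zpow_add, neg_add, mul_assoc, h.eq]
  group

def conjugatesLift (m : ℕ) : FreeGroup (Fin m) →* G :=
  FreeGroup.lift fun i => b ^ (i : ℤ) * a * b ^ (-(i : ℤ))

variable {a b} {m : ℕ}

theorem conjugatesLift_finRotate (h : Commute (b ^ (m : ℤ)) a) :
    Function.Semiconj (conjugatesLift a b m) (FreeGroup.freeGroupCongr (finRotate m))
      (MulAut.conj b) := by
  suffices (conjugatesLift a b m).comp (FreeGroup.freeGroupCongr (finRotate m)).toMonoidHom =
      (MulAut.conj b).toMonoidHom.comp (conjugatesLift a b m) from DFunLike.congr_fun this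
  refine FreeGroup.ext_hom _ _ fun i => ?_
  simp only [conjugatesLift, MonoidHom.comp_apply, MulEquiv.coe_toMonoidHom,
    FreeGroup.freeGroupCongr_apply, FreeGroup.map.of, finRotate_apply, FreeGroup.lift_apply_of,
    MulAut.conj_apply, Fin.intCast_val_add_one]
  rw [(periodic_zpow_mul_mul_zpow_neg a b h).apply_emod]
  group

theorem conjugatesLift_comp_rotAction (h : Commute (b ^ (m : ℤ)) a) (g : Multiplicative ℤ) :
    (conjugatesLift a b m).comp (rotAction m g).toMonoidHom =
      (MulAut.conj (zpowersHom G b g)).toMonoidHom.comp (conjugatesLift a b m) := by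
  ext i
  simpa only [rotAction, zpowersHom_apply, map_zpow, MonoidHom.comp_apply,
    MulEquiv.coe_toMonoidHom] using
    (conjugatesLift_finRotate h).mulAut_zpow g.toAdd (FreeGroup.of i)

end Conjugates

section Rotation

open SemidirectProduct Fin.NatCast

variable {m : ℕ}

theorem inr_ofAdd_one_zpow (z : ℤ) :
    (inr (Multiplicative.ofAdd 1) : FreeGroup (Fin m) ⋊[rotAction m] Multiplicative ℤ) ^ z =
      inr (Multiplicative.ofAdd z) := by
  rw [← map_zpow, ← ofAdd_zsmul, smul_eq_mul, mul_one]

variable [NeZero m]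

theorem rotAction_ofAdd_natCast_of (k : ℕ) (i : Fin m) :
    rotAction m (Multiplicative.ofAdd (k : ℤ)) (FreeGroup.of i) = FreeGroup.of (i + k) := by
  rw [rotAction, zpowersHom_apply, toAdd_ofAdd, zpow_natCast]
  induction k generalizing i with
  | zero => simp
  | succ k ih =>
    rw [pow_succ, MulAut.mul_apply, FreeGroup.freeGroupCongr_apply, FreeGroup.map.of,
      finRotate_apply, ih, Nat.cast_succ, add_right_comm, add_assoc]

theorem inr_ofAdd_natCast_mul_inl_of_mul_inv (k : ℕ) (i : Fin m) :
    (inr (Multiplicative.ofAdd (k : ℤ)) * inl (FreeGroup.of i) *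
        (inr (Multiplicative.ofAdd (k : ℤ)))⁻¹ :
      FreeGroup (Fin m) ⋊[rotAction m] Multiplicative ℤ) = inl (FreeGroup.of (i + k)) := by
  rw [← map_inv, ← inl_aut, rotAction_ofAdd_natCast_of]

end Rotation

namespace BS

open SemidirectProduct Fin.NatCast

variable {m : ℕ} [NeZero m]

variable (m) in
def toSemidirect : BS m m →* FreeGroup (Fin m) ⋊[rotAction m] Multiplicative ℤ :=
  lift (a := inl (FreeGroup.of 0)) (b := inr (Multiplicative.ofAdd 1)) <| by
    rw [mul_assoc, inv_mul_eq_iff_eq_mul, ← mul_inv_eq_iff_eq_mul, inr_ofAdd_one_zpow,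
      inr_ofAdd_natCast_mul_inl_of_mul_inv, Fin.natCast_self, add_zero]

theorem toSemidirect_BSb : toSemidirect m (BSb m m) = inr (Multiplicative.ofAdd 1) :=
  lift_BSb _

theorem toSemidirect_conj_BSa (i : Fin m) :
    toSemidirect m (BSb m m ^ (i : ℤ) * BSa m m * BSb m m ^ (-(i : ℤ))) =
      inl (FreeGroup.of i) := by
  rw [map_mul, map_mul, map_zpow, map_zpow, toSemidirect, lift_BSa, lift_BSb, zpow_neg,
    inr_ofAdd_one_zpow, inr_ofAdd_natCast_mul_inl_of_mul_inv, zero_add, Fin.cast_val_eq_self]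

variable (m) in
def ofSemidirect : FreeGroup (Fin m) ⋊[rotAction m] Multiplicative ℤ →* BS m m :=
  SemidirectProduct.lift (conjugatesLift (BSa m m) (BSb m m) m) (zpowersHom _ (BSb m m))
    (conjugatesLift_comp_rotAction (commute_BSb_zpow_BSa m))

theorem ofSemidirect_comp_toSemidirect : (ofSemidirect m).comp (toSemidirect m) = .id _ :=
  hom_ext (by simp [toSemidirect, ofSemidirect, conjugatesLift])
    (by simp [toSemidirect, ofSemidirect])

theorem toSemidirect_comp_ofSemidirect : (toSemidirect m).comp (ofSemidirect m) = .id _ := by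
  refine SemidirectProduct.hom_ext (FreeGroup.ext_hom _ _ fun i => ?_) (MonoidHom.ext_mint ?_)
  · simp only [MonoidHom.comp_apply, ofSemidirect, lift_inl, conjugatesLift,
      FreeGroup.lift_apply_of, MonoidHom.id_apply]
    exact toSemidirect_conj_BSa i
  · simp [ofSemidirect, toSemidirect_BSb]

variable (m) in
def equivSemidirect : BS m m ≃* FreeGroup (Fin m) ⋊[rotAction m] Multiplicative ℤ :=
  (toSemidirect m).toMulEquiv (ofSemidirect m) ofSemidirect_comp_toSemidirect
    toSemidirect_comp_ofSemidirect

theorem eq_rightHom_comp_toSemidirect (π : BS m m →* Multiplicative ℤ)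
    (hb : π (BSb m m) = Multiplicative.ofAdd 1) (ha : π (BSa m m) = 1) :
    π = rightHom.comp (toSemidirect m) :=
  hom_ext (by simp [ha, toSemidirect]) (by simp [hb, toSemidirect])

end BS

/-- For `m > 1`, `B(m,m)` is isomorphic to `F_m ⋊ ℤ` where the generator `1 ∈ ℤ` acts by
cyclically permuting the free generators; the isomorphism sends `b` to the generator of
`ℤ` and the conjugates `b^i a b⁻ⁱ` of `a` to the free generators, so that the kernel of
the `b`-exponent-sum homomorphism is free of rank `m` on these conjugates of `a`. -/
theorem BS_m_m_iso_free_semidirect (m : ℕ) (hm : 1 < m) :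
    ∃ e : BS m m ≃* FreeGroup (Fin m) ⋊[rotAction m] Multiplicative ℤ,
      e (BSb m m) = SemidirectProduct.inr (Multiplicative.ofAdd 1) ∧
      (∀ i : Fin m,
        e (BSb m m ^ (i : ℤ) * BSa m m * BSb m m ^ (-(i : ℤ))) =
          SemidirectProduct.inl (FreeGroup.of i)) ∧
      ∀ π : BS m m →* Multiplicative ℤ,
        π (BSb m m) = Multiplicative.ofAdd 1 → π (BSa m m) = 1 →
          ∀ g : BS m m, g ∈ π.ker ↔ (e g).right = 1 := by
  have : NeZero m := ⟨by omega⟩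
  refine ⟨BS.equivSemidirect m, BS.toSemidirect_BSb, BS.toSemidirect_conj_BSa,
    fun π hb ha g => ?_⟩
  rw [MonoidHom.mem_ker, BS.eq_rightHom_comp_toSemidirect π hb ha]
  rfl
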